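/- arXiv:2106.12629 — 5 statements merged into one kernel-verified Lean document; each statement's English description precedes it below -/
import Mathlib

section
/- Let $S = \{x \in \mathbb{R}^n : x^\top A_i x + 2 b_i^\top x + c_i < 0, \ i \in [m]\}$ and let $S^h = \{(x, t) \in \mathbb{R}^{n+1} : x^\top A_i x + 2 t\, b_i^\top x + c_i t^2 < 0, \ i \in [m]\}$ be its homogenization. Let $\alpha^\top x < \beta$ be a valid inequality for $\operatorname{conv}(S)$, i.e., $\alpha^\top x < \beta$ for all $x \in \operatorname{conv}(S)$. If $\operatorname{conv}(S) \neq \mathbb{R}^n$, then $\{(x,t) : \alpha^\top x = \beta t\} \cap S^h = \emptyset$. -/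
/-!
If `t ≠ 0`, dehomogenizing a point `(x, t)` of `Sh` gives `x / t ∈ S`, and `α ⬝ᵥ x = β t` would put
`x / t` on the hyperplane `α ⬝ᵥ y = β`, contradicting validity. If `t = 0`, then `x` is a common
direction of negative curvature of all the quadratics, so for every `z` both `z + s x` and `z - s x`
lie in `S` for large `s`; hence `z ∈ conv S` and `conv S` is the whole space.
-/

open scoped Matrix
open Filter

section Quadratic

variable {ι : Type*} [Fintype ι]

lemma quadratic_add_smul (A : Matrix ι ι ℝ) (b z d : ι → ℝ) (c s : ℝ) :
    (z + s • d) ⬝ᵥ (A *ᵥ (z + s • d)) + 2 * (b ⬝ᵥ (z + s • d)) + c =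
      d ⬝ᵥ (A *ᵥ d) * s ^ 2 + (z ⬝ᵥ (A *ᵥ d) + d ⬝ᵥ (A *ᵥ z) + 2 * (b ⬝ᵥ d)) * s +
        (z ⬝ᵥ (A *ᵥ z) + 2 * (b ⬝ᵥ z) + c) := by
  simp only [Matrix.mulVec_add, Matrix.mulVec_smul, dotProduct_add, add_dotProduct,
    dotProduct_smul, smul_dotProduct, smul_eq_mul]
  ring

lemma quadratic_inv_smul (A : Matrix ι ι ℝ) (b x : ι → ℝ) (c : ℝ) {t : ℝ} (ht : t ≠ 0) :
    (t⁻¹ • x) ⬝ᵥ (A *ᵥ (t⁻¹ • x)) + 2 * (b ⬝ᵥ (t⁻¹ • x)) + c =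
      (t ^ 2)⁻¹ * (x ⬝ᵥ (A *ᵥ x) + 2 * t * (b ⬝ᵥ x) + c * t ^ 2) := by
  simp only [Matrix.mulVec_smul, dotProduct_smul, smul_dotProduct, smul_eq_mul]
  field_simp

lemma tendsto_quadratic_atBot {a B C : ℝ} (ha : a < 0) :
    Tendsto (fun s : ℝ => a * s ^ 2 + B * s + C) atTop atBot := by
  have hlin : Tendsto (fun s : ℝ => a * s + B) atTop atBot :=
    (tendsto_id.const_mul_atTop_of_neg ha).atBot_add tendsto_const_nhds
  convert (tendsto_id.atTop_mul_atBot₀ hlin).atBot_add (tendsto_const_nhds (x := C)) using 2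
  simp only [id]
  ring

lemma eventually_quadratic_add_smul_neg (A : Matrix ι ι ℝ) (b z : ι → ℝ) (c : ℝ) {d : ι → ℝ}
    (hd : d ⬝ᵥ (A *ᵥ d) < 0) :
    ∀ᶠ s : ℝ in atTop, (z + s • d) ⬝ᵥ (A *ᵥ (z + s • d)) + 2 * (b ⬝ᵥ (z + s • d)) + c < 0 := by
  simp only [quadratic_add_smul]
  exact (tendsto_quadratic_atBot hd).eventually (eventually_lt_atBot 0)

end Quadratic

lemma mem_convexHull_of_add_mem_of_sub_mem {E : Type*} [AddCommGroup E] [Module ℝ E] {s : Set E}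
    {z v : E} (hadd : z + v ∈ s) (hsub : z - v ∈ s) : z ∈ convexHull ℝ s := by
  have hmid := convex_convexHull ℝ s (subset_convexHull ℝ s hadd) (subset_convexHull ℝ s hsub)
    (by norm_num : (0 : ℝ) ≤ 1 / 2) (by norm_num : (0 : ℝ) ≤ 1 / 2) (by norm_num)
  convert hmid using 1
  module

section System

variable {ι κ : Type*} [Fintype ι]
  (A : κ → Matrix ι ι ℝ) (b : κ → ι → ℝ) (c : κ → ℝ)

lemma convexHull_eq_univ_of_forall_quadForm_neg [Finite κ] {d : ι → ℝ} (hd : ∀ k, d ⬝ᵥ (A k *ᵥ d) < 0) :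
    convexHull ℝ {x | ∀ k, x ⬝ᵥ (A k *ᵥ x) + 2 * (b k ⬝ᵥ x) + c k < 0} = Set.univ := by
  refine Set.eq_univ_of_forall fun z => ?_
  have hneg : ∀ k, (-d) ⬝ᵥ (A k *ᵥ -d) < 0 := by
    simpa only [Matrix.mulVec_neg, dotProduct_neg, neg_dotProduct, neg_neg] using hd
  have hray (d : ι → ℝ) (hd : ∀ k, d ⬝ᵥ (A k *ᵥ d) < 0) : ∀ᶠ s : ℝ in atTop,
      ∀ k, (z + s • d) ⬝ᵥ (A k *ᵥ (z + s • d)) + 2 * (b k ⬝ᵥ (z + s • d)) + c k < 0 :=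
    eventually_all.2 fun k => eventually_quadratic_add_smul_neg (A k) (b k) z (c k) (hd k)
  obtain ⟨s, hplus, hminus⟩ := ((hray d hd).and (hray (-d) hneg)).exists
  rw [smul_neg, ← sub_eq_add_neg] at hminus
  exact mem_convexHull_of_add_mem_of_sub_mem hplus hminus

lemma inv_smul_mem_of_homogenized_neg {x : ι → ℝ} {t : ℝ} (ht : t ≠ 0)
    (hx : ∀ k, x ⬝ᵥ (A k *ᵥ x) + 2 * t * (b k ⬝ᵥ x) + c k * t ^ 2 < 0) :
    t⁻¹ • x ∈ {x | ∀ k, x ⬝ᵥ (A k *ᵥ x) + 2 * (b k ⬝ᵥ x) + c k < 0} := fun k => by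
  rw [quadratic_inv_smul _ _ _ _ ht]
  exact mul_neg_of_pos_of_neg (by positivity) (hx k)

end System

theorem stmt3_general {n m : ℕ} (A : Fin m → Matrix (Fin n) (Fin n) ℝ)
    (b : Fin m → (Fin n → ℝ)) (c : Fin m → ℝ)
    (S : Set (Fin n → ℝ))
    (hS : S = {x | ∀ i, x ⬝ᵥ (A i *ᵥ x) + 2 * (b i ⬝ᵥ x) + c i < 0})
    (Sh : Set ((Fin n → ℝ) × ℝ))
    (hSh : Sh = {p | ∀ i, p.1 ⬝ᵥ (A i *ᵥ p.1) + 2 * p.2 * (b i ⬝ᵥ p.1) + c i * p.2 ^ 2 < 0})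
    (α : Fin n → ℝ) (β : ℝ)
    (hvalid : ∀ x ∈ convexHull ℝ S, α ⬝ᵥ x < β)
    (hnontriv : convexHull ℝ S ≠ Set.univ) :
    {p : (Fin n → ℝ) × ℝ | α ⬝ᵥ p.1 = β * p.2} ∩ Sh = ∅ := by
  subst hS hSh
  refine Set.eq_empty_iff_forall_notMem.2 fun ⟨x, t⟩ ⟨hplane, hmem⟩ => ?_
  rcases eq_or_ne t 0 with rfl | ht
  · exact hnontriv (convexHull_eq_univ_of_forall_quadForm_neg A b c fun i => by
      simpa using hmem i)
  · have hlt := hvalid _ (subset_convexHull ℝ _ (inv_smul_mem_of_homogenized_neg A b c ht hmem))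
    rw [dotProduct_smul, smul_eq_mul, hplane, mul_left_comm, inv_mul_cancel₀ ht, mul_one] at hlt
    exact hlt.false

theorem stmt3 {n m : ℕ} (A : Fin m → Matrix (Fin n) (Fin n) ℝ)
    (hsymm : ∀ i, (A i).IsSymm) (b : Fin m → (Fin n → ℝ)) (c : Fin m → ℝ)
    (S : Set (Fin n → ℝ))
    (hS : S = {x | ∀ i, x ⬝ᵥ (A i *ᵥ x) + 2 * (b i ⬝ᵥ x) + c i < 0})
    (Sh : Set ((Fin n → ℝ) × ℝ))
    (hSh : Sh = {p | ∀ i, p.1 ⬝ᵥ (A i *ᵥ p.1) + 2 * p.2 * (b i ⬝ᵥ p.1) + c i * p.2 ^ 2 < 0})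
    (α : Fin n → ℝ) (β : ℝ)
    (hvalid : ∀ x ∈ convexHull ℝ S, α ⬝ᵥ x < β)
    (hnontriv : convexHull ℝ S ≠ Set.univ) :
    {p : (Fin n → ℝ) × ℝ | α ⬝ᵥ p.1 = β * p.2} ∩ Sh = ∅ :=
  stmt3_general A b c S hS Sh hSh α β hvalid hnontriv
end

section
/- There is no $\lambda = (\lambda_1, \lambda_2, \lambda_3, \lambda_4) \in \mathbb{R}^4$ with $\lambda \geq 0$ and $\lambda \neq 0$ such that $\lambda_1 A_1 + \lambda_2 A_2 + \lambda_3 A_3 + \lambda_4 A_4 \succ 0$ (positive definite), where $A_1 = \begin{bmatrix} 1 & 1.1 & 1.1 \\ 1.1 & 1 & 1.1 \\ 1.1 & 1.1 & 1 \end{bmatrix}$, $A_2 = \operatorname{diag}(-2.1, 1, 1)$, $A_3 = \operatorname{diag}(1, -2.1, 1)$, $A_4 = \operatorname{diag}(1, 1, -2.1)$. -/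
/-!
Sum the quadratic form of `M` over all difference vectors `eᵢ - eⱼ`: the result is the linear
functional `2 (n tr M - 1ᵀ M 1)`, which is positive whenever `M ≻ 0` and `n ≥ 2`. For `n = 3` it
takes the value `-0.6` on `A₁` and `-0.2` on each of `A₂, A₃, A₄`, so it is `≤ 0` on every
nonnegative combination of them, which therefore cannot be positive definite.
-/

open Matrix Finset

variable {n R : Type*} [Fintype n] [DecidableEq n]

theorem Matrix.single_sub_single_dotProduct_mulVec [CommRing R] (M : Matrix n n R) (i j : n) :
    (Pi.single i 1 - Pi.single j 1) ⬝ᵥ M *ᵥ (Pi.single i 1 - Pi.single j 1) =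
      M i i - M i j - M j i + M j j := by
  simp only [mulVec_sub, dotProduct_sub, sub_dotProduct, single_one_dotProduct, mulVec_single_one]
  simp [col_apply]
  ring

theorem Matrix.sum_single_sub_single_dotProduct_mulVec [CommRing R] (M : Matrix n n R) :
    ∑ i, ∑ j, (Pi.single i 1 - Pi.single j 1) ⬝ᵥ M *ᵥ (Pi.single i 1 - Pi.single j 1) =
      2 * (Fintype.card n * M.trace - ∑ i, ∑ j, M i j) := by
  simp only [single_sub_single_dotProduct_mulVec, sum_add_distrib, sum_sub_distrib, sum_const,
    card_univ, nsmul_eq_mul, trace, diag_apply, ← mul_sum]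
  rw [sum_comm (f := fun i j => M j i)]
  ring

theorem Matrix.PosDef.card_mul_trace_sub_sum_pos [Field R] [LinearOrder R] [IsStrictOrderedRing R]
    [StarRing R] [TrivialStar R] [Nontrivial n] {M : Matrix n n R} (hM : M.PosDef) :
    0 < Fintype.card n * M.trace - ∑ i, ∑ j, M i j := by
  have hnonneg (i j : n) :
      0 ≤ (Pi.single i 1 - Pi.single j 1) ⬝ᵥ M *ᵥ (Pi.single i (1 : R) - Pi.single j 1) := by
    simpa only [star_trivial] using hM.posSemidef.dotProduct_mulVec_nonneg _
  obtain ⟨i, j, hij⟩ := exists_pair_ne n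
  have hpos : 0 < (Pi.single i 1 - Pi.single j 1) ⬝ᵥ M *ᵥ (Pi.single i (1 : R) - Pi.single j 1) := by
    simpa only [star_trivial] using
      hM.dotProduct_mulVec_pos fun h => by simpa [hij] using congrFun h i
  have hsum := sum_pos' (fun i _ => sum_nonneg fun j _ => hnonneg i j)
    ⟨i, mem_univ i, sum_pos' (fun j _ => hnonneg i j) ⟨j, mem_univ j, hpos⟩⟩
  rw [sum_single_sub_single_dotProduct_mulVec] at hsum
  linarith

theorem stmt8 :
    ¬ ∃ l : Fin 4 → ℝ, (∀ i, 0 ≤ l i) ∧ l ≠ 0 ∧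
      (l 0 • !![(1:ℝ), 1.1, 1.1; 1.1, 1, 1.1; 1.1, 1.1, 1] +
       l 1 • !![(-2.1:ℝ), 0, 0; 0, 1, 0; 0, 0, 1] +
       l 2 • !![(1:ℝ), 0, 0; 0, -2.1, 0; 0, 0, 1] +
       l 3 • !![(1:ℝ), 0, 0; 0, 1, 0; 0, 0, -2.1]).PosDef := by
  rintro ⟨l, hl, -, hpd⟩
  have key := hpd.card_mul_trace_sub_sum_pos
  simp [trace, Fin.sum_univ_three, vecHead, vecTail] at key
  linarith [hl 0, hl 1, hl 2, hl 3]
end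

section
/- Let $T = \{x \in \mathbb{R}^3 : x_1^2 + x_2^2 \leq 2, \ -x_1^2 - x_2^2 \leq -1, \ -x_1^2 + x_2^2 + x_3^2 + 6x_1 \leq 0\}$. Then every $x \in T$ satisfies $x_1 \leq \frac{1}{2}(3 - \sqrt{11})$; in particular $\sup\{x_1 : x \in T\} < 0$. -/
/-!
Adding the lower bound `1 ≤ x₁² + x₂²` to the third constraint eliminates `x₂` and leaves
`x₃² ≤ 2x₁² - 6x₁ - 1`, so `x₁` lies outside the open interval between the roots
`(3 ± √11)/2` of `x² - 3x - 1/2`. Adding the upper bound `x₁² + x₂² ≤ 2` instead gives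
`6x₁ ≤ 2`, which excludes the branch `x₁ ≥ (3 + √11)/2 > 3`.
-/

open Real

lemma three_lt_sqrt_eleven : (3 : ℝ) < √11 :=
  (lt_sqrt (by norm_num)).2 (by norm_num)

lemma sq_sub_three_mul_sub_half_eq (x : ℝ) :
    x ^ 2 - 3 * x - 1 / 2 = (x - (3 - √11) / 2) * (x - (3 + √11) / 2) := by
  have h : √11 ^ 2 = 11 := sq_sqrt (by norm_num)
  linear_combination h / 4

lemma le_left_root_of_sq_sub_three_mul_sub_half_nonneg {x : ℝ}
    (hq : 0 ≤ x ^ 2 - 3 * x - 1 / 2) (hx : x < (3 + √11) / 2) : x ≤ (3 - √11) / 2 := by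
  rw [sq_sub_three_mul_sub_half_eq] at hq
  exact sub_nonpos.1 (nonpos_of_mul_nonneg_left hq (sub_neg.2 hx))

section Constraints

variable {x₁ x₂ x₃ : ℝ}

lemma sq_sub_three_mul_sub_half_nonneg (h₂ : -x₁ ^ 2 - x₂ ^ 2 ≤ -1)
    (h₃ : -x₁ ^ 2 + x₂ ^ 2 + x₃ ^ 2 + 6 * x₁ ≤ 0) : 0 ≤ x₁ ^ 2 - 3 * x₁ - 1 / 2 := by
  linarith [sq_nonneg x₃]

lemma le_one_third (h₁ : x₁ ^ 2 + x₂ ^ 2 ≤ 2)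
    (h₃ : -x₁ ^ 2 + x₂ ^ 2 + x₃ ^ 2 + 6 * x₁ ≤ 0) : x₁ ≤ 1 / 3 := by
  linarith [sq_nonneg x₂, sq_nonneg x₃]

end Constraints

theorem stmt11 :
    (∀ x1 x2 x3 : ℝ, x1 ^ 2 + x2 ^ 2 ≤ 2 → -x1 ^ 2 - x2 ^ 2 ≤ -1 →
      -x1 ^ 2 + x2 ^ 2 + x3 ^ 2 + 6 * x1 ≤ 0 →
      x1 ≤ (3 - Real.sqrt 11) / 2) ∧ (3 - Real.sqrt 11) / 2 < 0 := by
  refine ⟨fun x1 x2 x3 h₁ h₂ h₃ => ?_, by linarith [three_lt_sqrt_eleven]⟩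
  have hx : x1 < (3 + √11) / 2 := by linarith [le_one_third h₁ h₃, three_lt_sqrt_eleven]
  exact le_left_root_of_sq_sub_three_mul_sub_half_nonneg
    (sq_sub_three_mul_sub_half_nonneg h₂ h₃) hx
end

section
/- Let $S = \{x \in \mathbb{R}^2 : x_1^2 \leq 1, \ x_2^2 \leq 1, \ (x_1-1)^2 + (x_2-1)^2 \geq 1\}$. Then $\operatorname{conv}(S) = \{x \in \mathbb{R}^2 : x_1^2 \leq 1, \ x_2^2 \leq 1, \ x_1 + x_2 \leq 1\}$. -/
/-!
Both sets lie in the square `[-1, 1]²`. A point of the square with `x₀ + x₁ > 1` has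
`0 ≤ 1 - xᵢ` and `(1 - x₀) + (1 - x₁) < 1`, so it lies inside the removed unit disk around
`(1, 1)`; hence the set is contained in the (convex) truncated square. Conversely, every
horizontal slice of the truncated square is a segment whose left end `(-1, x₁)` lies in the
set and whose right end is either `(1, x₁)` (when `x₁ ≤ 0`) or the point `(1 - x₁, x₁)` of the
chord from `(1, 0)` to `(0, 1)`, whose end points lie in the set.
-/

open Function

def squareMinusDisk : Set (Fin 2 → ℝ) :=
  {x | x 0 ^ 2 ≤ 1 ∧ x 1 ^ 2 ≤ 1 ∧ 1 ≤ (x 0 - 1) ^ 2 + (x 1 - 1) ^ 2}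

def truncatedSquare : Set (Fin 2 → ℝ) :=
  {x | x 0 ^ 2 ≤ 1 ∧ x 1 ^ 2 ≤ 1 ∧ x 0 + x 1 ≤ 1}

theorem Convex.mem_of_update_mem {𝕜 ι : Type*} [Field 𝕜] [LinearOrder 𝕜]
    [IsStrictOrderedRing 𝕜] [DecidableEq ι] {K : Set (ι → 𝕜)} (hK : Convex 𝕜 K)
    {x : ι → 𝕜} {i : ι} {p q : 𝕜} (hp : update x i p ∈ K) (hq : update x i q ∈ K)
    (hpx : p ≤ x i) (hxq : x i ≤ q) : x ∈ K := by
  have hx : x ∈ update x i '' segment 𝕜 p q :=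
    ⟨x i, by rw [segment_eq_Icc (hpx.trans hxq)]; exact ⟨hpx, hxq⟩, update_eq_self i x⟩
  rw [Pi.image_update_segment] at hx
  exact hK.segment_subset hp hq hx

theorem one_le_add_of_one_le_sq_add_sq {u v : ℝ} (hu : 0 ≤ u) (hv : 0 ≤ v)
    (h : 1 ≤ u ^ 2 + v ^ 2) : 1 ≤ u + v := by
  nlinarith [mul_nonneg hu hv]

theorem convex_truncatedSquare : Convex ℝ truncatedSquare := by
  have hsq : ∀ i : Fin 2, Convex ℝ {x : Fin 2 → ℝ | x i ^ 2 ≤ 1} := fun i => by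
    have hconv := (Even.convexOn_pow (𝕜 := ℝ) even_two).comp_linearMap
      (LinearMap.proj (R := ℝ) (φ := fun _ : Fin 2 => ℝ) i)
    simpa using hconv.convex_le 1
  have hsum : Convex ℝ {x : Fin 2 → ℝ | x 0 + x 1 ≤ 1} :=
    convex_halfSpace_le (LinearMap.proj (R := ℝ) (φ := fun _ : Fin 2 => ℝ) 0 +
      LinearMap.proj 1).isLinear 1
  exact (hsq 0).inter ((hsq 1).inter hsum)

theorem squareMinusDisk_subset_truncatedSquare : squareMinusDisk ⊆ truncatedSquare := by
  rintro x ⟨h0, h1, hdisk⟩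
  refine ⟨h0, h1, ?_⟩
  have := one_le_add_of_one_le_sq_add_sq (u := 1 - x 0) (v := 1 - x 1)
    (by nlinarith) (by nlinarith) (by nlinarith)
  linarith

theorem antidiagonal_mem_segment {t : ℝ} (h0 : 0 ≤ t) (h1 : t ≤ 1) :
    ![1 - t, t] ∈ segment ℝ ![(1 : ℝ), 0] ![0, 1] :=
  ⟨1 - t, t, by linarith, h0, by ring, by ext i; fin_cases i <;> simp⟩

theorem truncatedSquare_subset_convexHull :
    truncatedSquare ⊆ convexHull ℝ squareMinusDisk := by
  rintro x ⟨h0, h1, hsum⟩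
  have hK := convex_convexHull ℝ squareMinusDisk
  obtain ⟨hx0_lo, hx0_hi⟩ := abs_le.mp (sq_le_one_iff_abs_le_one _ |>.mp h0)
  have hx1_hi : x 1 ≤ 1 := (abs_le.mp (sq_le_one_iff_abs_le_one _ |>.mp h1)).2
  have hleft : update x 0 (-1) ∈ convexHull ℝ squareMinusDisk :=
    subset_convexHull ℝ _ ⟨by simp, by simpa using h1, by simp; nlinarith⟩
  rcases le_or_gt (x 1) 0 with hneg | hpos
  · have hright : update x 0 1 ∈ convexHull ℝ squareMinusDisk :=
      subset_convexHull ℝ _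
        ⟨by simp, by simpa using h1, by simp; exact le_abs.mpr (.inr (by linarith))⟩
    exact hK.mem_of_update_mem hleft hright hx0_lo hx0_hi
  · have hchord : update x 0 (1 - x 1) ∈ convexHull ℝ squareMinusDisk := by
      have h10 : ![(1 : ℝ), 0] ∈ squareMinusDisk := by norm_num [squareMinusDisk]
      have h01 : ![(0 : ℝ), 1] ∈ squareMinusDisk := by norm_num [squareMinusDisk]
      have heq : update x 0 (1 - x 1) = ![1 - x 1, x 1] := by
        ext i; fin_cases i <;> simp
      rw [heq]
      exact hK.segment_subset (subset_convexHull ℝ _ h10) (subset_convexHull ℝ _ h01)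
        (antidiagonal_mem_segment hpos.le hx1_hi)
    exact hK.mem_of_update_mem hleft hchord hx0_lo (by linarith)

theorem stmt17 :
    convexHull ℝ {x : Fin 2 → ℝ |
        (x 0) ^ 2 ≤ 1 ∧ (x 1) ^ 2 ≤ 1 ∧ 1 ≤ (x 0 - 1) ^ 2 + (x 1 - 1) ^ 2} =
      {x : Fin 2 → ℝ | (x 0) ^ 2 ≤ 1 ∧ (x 1) ^ 2 ≤ 1 ∧ x 0 + x 1 ≤ 1} := by
  change convexHull ℝ squareMinusDisk = truncatedSquare
  exact (convexHull_min squareMinusDisk_subset_truncatedSquare convex_truncatedSquare).antisymm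
    truncatedSquare_subset_convexHull
end

section
/- Let $\mathcal{P} = \{x \in \mathbb{R}^{n+1} : x^\top P x < 0\}$ be nonempty, where $P$ is a symmetric $(n+1)\times(n+1)$ matrix. If there exists a linear hyperplane $H = \{x : a^\top x = 0\}$ (with $a \neq 0$) such that $H \cap \mathcal{P} = \emptyset$, then $P$ has exactly one negative eigenvalue. -/
open scoped Matrix

/-!
Two orthonormal eigenvectors `u, v` with negative eigenvalues span a plane on which the quadratic
form `x ↦ xᵀ P x` is negative definite. Every linear hyperplane meets this plane in a nonzero
vector, so a hyperplane avoiding `{x | xᵀ P x < 0}` forces at most one negative eigenvalue.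
Nonemptiness of that set says that `P` is not positive semidefinite, i.e. that there is at least
one negative eigenvalue.
-/

lemma exists_dotProduct_add_smul_eq_zero {ι : Type*} [Fintype ι] (a u v : ι → ℝ) :
    ∃ c d : ℝ, (c ≠ 0 ∨ d ≠ 0) ∧ a ⬝ᵥ (c • u + d • v) = 0 := by
  by_cases hu : a ⬝ᵥ u = 0
  · exact ⟨1, 0, Or.inl one_ne_zero, by simp [hu]⟩
  · refine ⟨a ⬝ᵥ v, -(a ⬝ᵥ u), Or.inr (neg_ne_zero.mpr hu), ?_⟩
    simp only [dotProduct_add, dotProduct_smul, smul_eq_mul]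
    ring

namespace Matrix.IsHermitian

variable {ι : Type*} [Fintype ι] [DecidableEq ι] {A : Matrix ι ι ℝ} (hA : A.IsHermitian)

lemma dotProduct_eigenvectorBasis (i j : ι) :
    ⇑(hA.eigenvectorBasis i) ⬝ᵥ ⇑(hA.eigenvectorBasis j) = if i = j then 1 else 0 := by
  have h := orthonormal_iff_ite.mp hA.eigenvectorBasis.orthonormal i j
  rw [EuclideanSpace.inner_eq_star_dotProduct] at h
  simpa [dotProduct_comm] using h

lemma quadForm_add_eigenvectorBasis {i j : ι} (hij : i ≠ j) (c d : ℝ) :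
    (c • ⇑(hA.eigenvectorBasis i) + d • ⇑(hA.eigenvectorBasis j)) ⬝ᵥ
        (A *ᵥ (c • ⇑(hA.eigenvectorBasis i) + d • ⇑(hA.eigenvectorBasis j))) =
      c ^ 2 * hA.eigenvalues i + d ^ 2 * hA.eigenvalues j := by
  simp only [mulVec_add, mulVec_smul, mulVec_eigenvectorBasis, add_dotProduct, dotProduct_add,
    smul_dotProduct, dotProduct_smul, dotProduct_eigenvectorBasis, if_true, if_neg hij,
    if_neg hij.symm, smul_eq_mul]
  ring

lemma card_eigenvalues_neg_le_one (a : ι → ℝ)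
    (hsep : ∀ x : ι → ℝ, a ⬝ᵥ x = 0 → ¬ x ⬝ᵥ (A *ᵥ x) < 0) :
    (Finset.univ.filter fun i => hA.eigenvalues i < 0).card ≤ 1 := by
  refine Finset.card_le_one.mpr fun i hi j hj => by_contra fun hij => ?_
  simp only [Finset.mem_filter, Finset.mem_univ, true_and] at hi hj
  obtain ⟨c, d, hcd, hax⟩ :=
    exists_dotProduct_add_smul_eq_zero a (hA.eigenvectorBasis i) (hA.eigenvectorBasis j)
  refine hsep _ hax ?_
  rw [hA.quadForm_add_eigenvectorBasis hij]
  rcases hcd with hc | hd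
  · nlinarith [sq_pos_of_ne_zero hc, sq_nonneg d]
  · nlinarith [sq_pos_of_ne_zero hd, sq_nonneg c]

lemma one_le_card_eigenvalues_neg (hneg : ∃ x : ι → ℝ, x ⬝ᵥ (A *ᵥ x) < 0) :
    1 ≤ (Finset.univ.filter fun i => hA.eigenvalues i < 0).card := by
  obtain ⟨x, hx⟩ := hneg
  refine Finset.one_le_card.mpr (Finset.filter_nonempty_iff.mpr ?_)
  by_contra! h
  have hpsd : A.PosSemidef := hA.posSemidef_iff_eigenvalues_nonneg.mpr fun i => h i (by simp)
  simpa using (hpsd.dotProduct_mulVec_nonneg x).trans_lt hx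

end Matrix.IsHermitian

theorem stmt19_general {n : ℕ} (P : Matrix (Fin (n + 1)) (Fin (n + 1)) ℝ)
    (hP : P.IsHermitian)
    (hne : ∃ x : Fin (n + 1) → ℝ, x ⬝ᵥ (P *ᵥ x) < 0)
    (a : Fin (n + 1) → ℝ)
    (hsep : ∀ x : Fin (n + 1) → ℝ, a ⬝ᵥ x = 0 → ¬ x ⬝ᵥ (P *ᵥ x) < 0) :
    (Finset.univ.filter fun i => hP.eigenvalues i < 0).card = 1 :=
  le_antisymm (hP.card_eigenvalues_neg_le_one a hsep) (hP.one_le_card_eigenvalues_neg hne)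

theorem stmt19 {n : ℕ} (P : Matrix (Fin (n + 1)) (Fin (n + 1)) ℝ)
    (hP : P.IsHermitian)
    (hne : ∃ x : Fin (n + 1) → ℝ, x ⬝ᵥ (P *ᵥ x) < 0)
    (a : Fin (n + 1) → ℝ) (ha : a ≠ 0)
    (hsep : ∀ x : Fin (n + 1) → ℝ, a ⬝ᵥ x = 0 → ¬ x ⬝ᵥ (P *ᵥ x) < 0) :
    (Finset.univ.filter fun i => hP.eigenvalues i < 0).card = 1 :=
  stmt19_general P hP hne a hsep
end
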